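/- arXiv:2601.06597 — 2 statements merged into one kernel-verified Lean document; each statement's English description precedes it below -/
import Mathlib

section
/- Let U ∈ ℝ^{m×r} and V ∈ ℝ^{n×r}, and suppose that (U, V) minimizes ‖U'‖_F² + ‖V'‖_F² among all pairs (U', V') ∈ ℝ^{m×r} × ℝ^{n×r} with U' V'ᵀ = U Vᵀ, where ‖·‖_F denotes the Frobenius norm. Then Uᵀ U = Vᵀ V. -/
open Matrix NormedSpace

attribute [local instance] Matrix.linftyOpNormedAddCommGroup Matrix.linftyOpNormedRing
  Matrix.linftyOpNormedAlgebra

section aux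

variable {r : ℕ}

/-- entry evaluation as a continuous linear map -/
noncomputable def entryCLM (k j : Fin r) : Matrix (Fin r) (Fin r) ℝ →L[ℝ] ℝ :=
  LinearMap.toContinuousLinearMap
    { toFun := fun A => A k j
      map_add' := fun _ _ => rfl
      map_smul' := fun _ _ => rfl }

lemma hasDerivAt_exp_entry (N : Matrix (Fin r) (Fin r) ℝ) (k j : Fin r) :
    HasDerivAt (fun t : ℝ => exp (t • N) k j) (N k j) 0 := by
  have hE : HasDerivAt (fun t : ℝ => exp (t • N)) N 0 := by
    have h := hasDerivAt_exp_smul_const (𝕂 := ℝ) N 0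
    simp at h
    exact h
  exact ((entryCLM k j).hasFDerivAt.comp_hasDerivAt 0 hE)

lemma hasDerivAt_mul_exp_entry {p : ℕ} (W : Matrix (Fin p) (Fin r) ℝ)
    (N : Matrix (Fin r) (Fin r) ℝ) (i : Fin p) (j : Fin r) :
    HasDerivAt (fun t : ℝ => (W * exp (t • N)) i j) ((W * N) i j) 0 := by
  have h : ∀ t : ℝ, (W * exp (t • N)) i j = ∑ k, W i k * exp (t • N) k j := fun t =>
    Matrix.mul_apply
  simp only [h, Matrix.mul_apply]
  exact HasDerivAt.fun_sum fun k _ => (hasDerivAt_exp_entry N k j).const_mul (W i k)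

lemma trace_helper {p : ℕ} (W : Matrix (Fin p) (Fin r) ℝ) (N : Matrix (Fin r) (Fin r) ℝ) :
    ∑ i, ∑ j, W i j * (W * N) i j = ∑ j, ∑ k, (Wᵀ * W) j k * N k j := by
  simp only [Matrix.mul_apply, Matrix.transpose_apply, Finset.mul_sum, Finset.sum_mul]
  rw [Finset.sum_comm]
  refine Finset.sum_congr rfl fun j _ => ?_
  rw [Finset.sum_comm]
  refine Finset.sum_congr rfl fun k _ => ?_
  exact Finset.sum_congr rfl fun i _ => by ring

end aux

/-- Balancing: a Frobenius-minimal factorization `(U, V)` of the product `U Vᵀ`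
satisfies `UᵀU = VᵀV`. -/
theorem stmt_5 {m n r : ℕ} (U : Matrix (Fin m) (Fin r) ℝ) (V : Matrix (Fin n) (Fin r) ℝ)
    (hmin : ∀ (U' : Matrix (Fin m) (Fin r) ℝ) (V' : Matrix (Fin n) (Fin r) ℝ),
      U' * V'ᵀ = U * Vᵀ →
      (∑ i, ∑ j, (U i j) ^ 2) + (∑ i, ∑ j, (V i j) ^ 2) ≤
        (∑ i, ∑ j, (U' i j) ^ 2) + (∑ i, ∑ j, (V' i j) ^ 2)) :
    Uᵀ * U = Vᵀ * V := by
  set M : Matrix (Fin r) (Fin r) ℝ := Uᵀ * U - Vᵀ * V with hM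
  have hMsymm : Mᵀ = M := by
    simp [hM, Matrix.transpose_sub, Matrix.transpose_mul]
  have hsym : ∀ j k, M k j = M j k := fun j k => by
    conv_lhs => rw [← hMsymm]
    rfl
  have hprod : ∀ t : ℝ,
      (U * exp (t • M)) * (V * exp (t • (-M)))ᵀ = U * Vᵀ := by
    intro t
    have hcomm : Commute (t • M) (t • (-M)) :=
      ((Commute.refl M).neg_right.smul_left t).smul_right t
    have h1 : exp (t • M) * exp (t • (-M)) = 1 := by
      rw [← Matrix.exp_add_of_commute _ _ hcomm]
      simp
    have htr : (exp (t • (-M)))ᵀ = exp (t • (-M)) := by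
      rw [← Matrix.exp_transpose]
      congr 1
      simp [Matrix.transpose_smul, hMsymm]
    rw [Matrix.transpose_mul, htr, ← Matrix.mul_assoc, Matrix.mul_assoc U, h1, Matrix.mul_one]
  set g : ℝ → ℝ := fun t =>
    (∑ i, ∑ j, ((U * exp (t • M)) i j) ^ 2) +
      (∑ i, ∑ j, ((V * exp (t • (-M))) i j) ^ 2) with hg
  have hg0 : g 0 = (∑ i, ∑ j, (U i j) ^ 2) + (∑ i, ∑ j, (V i j) ^ 2) := by
    simp [hg]
  have hmin' : IsLocalMin g 0 := by
    apply Filter.Eventually.of_forall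
    intro t
    rw [hg0]
    exact hmin _ _ (hprod t)
  have hderiv : HasDerivAt g
      ((∑ i, ∑ j, 2 * U i j * (U * M) i j) +
        (∑ i, ∑ j, 2 * V i j * (V * (-M)) i j)) 0 := by
    apply HasDerivAt.add
    · apply HasDerivAt.fun_sum; intro i _
      apply HasDerivAt.fun_sum; intro j _
      have h := (hasDerivAt_mul_exp_entry U M i j).fun_pow 2
      simpa [mul_comm, mul_assoc, mul_left_comm] using h
    · apply HasDerivAt.fun_sum; intro i _
      apply HasDerivAt.fun_sum; intro j _
      have h := (hasDerivAt_mul_exp_entry V (-M) i j).fun_pow 2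
      simpa [mul_comm, mul_assoc, mul_left_comm] using h
  have hzero := hmin'.hasDerivAt_eq_zero hderiv
  have e1 : (∑ i, ∑ j, 2 * U i j * (U * M) i j) = 2 * ∑ j, ∑ k, (Uᵀ * U) j k * M k j := by
    rw [← trace_helper]
    simp [Finset.mul_sum, mul_assoc]
  have e2 : (∑ i, ∑ j, 2 * V i j * (V * (-M)) i j)
      = 2 * ∑ j, ∑ k, (Vᵀ * V) j k * (-M) k j := by
    rw [← trace_helper]
    simp [Finset.mul_sum, mul_assoc]
  rw [e1, e2] at hzero
  have key : ∑ j, ∑ k, M j k ^ 2 = 0 := by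
    have hsplit : ∑ j, ∑ k, M j k ^ 2
        = (∑ j, ∑ k, (Uᵀ * U) j k * M k j) + ∑ j, ∑ k, (Vᵀ * V) j k * (-M) k j := by
      rw [← Finset.sum_add_distrib]
      refine Finset.sum_congr rfl fun j _ => ?_
      rw [← Finset.sum_add_distrib]
      refine Finset.sum_congr rfl fun k _ => ?_
      have : M j k = (Uᵀ * U) j k - (Vᵀ * V) j k := by rw [hM]; simp [Matrix.sub_apply]
      simp only [Matrix.neg_apply]
      rw [hsym j k, this]
      ring
    rw [hsplit]
    linarith
  have hM0 : ∀ j k, M j k = 0 := by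
    intro j k
    have h1 := (Finset.sum_eq_zero_iff_of_nonneg
      (fun j _ => Finset.sum_nonneg fun k _ => sq_nonneg (M j k))).mp key j (Finset.mem_univ j)
    have h2 := (Finset.sum_eq_zero_iff_of_nonneg
      (fun k _ => sq_nonneg (M j k))).mp h1 k (Finset.mem_univ k)
    exact pow_eq_zero_iff (two_ne_zero) |>.mp h2
  have : M = 0 := by ext j k; exact hM0 j k
  rw [hM] at this
  exact sub_eq_zero.mp this
end

section
/- Let C > 0 and let L ≥ 1 be an integer. The function g(a₁, …, a_L) = ∏_{ℓ=1}^L a_ℓ + C ∑_{ℓ=1}^L a_ℓ⁻¹ on (0, ∞)^L attains its global minimum, and the minimum is attained exactly at the point a₁ = … = a_L = C^{1/(L+1)}. -/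
open Finset Real

lemma amgm_eq (n : ℕ) (hn : 0 < n) (b : Fin n → ℝ) (hb : ∀ i, 0 < b i) :
    (n : ℝ) * (∏ i, b i) ^ ((1 : ℝ) / n) ≤ ∑ i, b i ∧
      ((∑ i, b i = (n : ℝ) * (∏ i, b i) ^ ((1 : ℝ) / n)) ↔ ∀ i j, b i = b j) := by
  have hn' : (0 : ℝ) < n := by exact_mod_cast hn
  set w : Fin n → ℝ := fun _ => 1 / n with hw
  set x : Fin n → ℝ := fun i => Real.log (b i) with hx
  have h₀ : ∀ i ∈ Finset.univ, (0 : ℝ) < w i := fun i _ => by positivity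
  have h₁ : ∑ i : Fin n, w i = 1 := by
    simp [hw]
    field_simp
  have hmem : ∀ i ∈ Finset.univ, x i ∈ Set.univ := fun i _ => Set.mem_univ _
  have hprod : (0 : ℝ) < ∏ i, b i := Finset.prod_pos fun i _ => hb i
  have hG : (∏ i, b i) ^ ((1 : ℝ) / n) = Real.exp (∑ i, w i • x i) := by
    rw [Real.rpow_def_of_pos hprod]
    congr 1
    rw [Real.log_prod (fun i _ => (hb i).ne'), Finset.sum_mul]
    exact Finset.sum_congr rfl fun i _ => by simp [hw, hx]; ring
  have hS : ∑ i, w i • Real.exp (x i) = (1 / n) * ∑ i, b i := by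
    rw [Finset.mul_sum]
    exact Finset.sum_congr rfl fun i _ => by simp [hw, hx, Real.exp_log (hb i)]
  constructor
  · have := convexOn_exp.map_sum_le (fun i _ => (h₀ i (mem_univ i)).le) h₁ hmem
    rw [← hG] at this
    rw [hS] at this
    rw [mul_comm]
    calc (∏ i, b i) ^ ((1:ℝ)/n) * n ≤ (1/n) * (∑ i, b i) * n := by nlinarith
      _ = ∑ i, b i := by field_simp
  · constructor
    · intro heq
      have heq' : Real.exp (∑ i, w i • x i) = ∑ i, w i • Real.exp (x i) := by
        rw [← hG, hS, heq]; field_simp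
      have := (strictConvexOn_exp.map_sum_eq_iff h₀ h₁ hmem).mp heq'
      intro i j
      have hi := this i (mem_univ i)
      have hj := this j (mem_univ j)
      have : x i = x j := hi.trans hj.symm
      have := congrArg Real.exp this
      rwa [hx, Real.exp_log (hb i), Real.exp_log (hb j)] at this
    · intro hconst
      obtain ⟨i₀⟩ : Nonempty (Fin n) := ⟨⟨0, hn⟩⟩
      have hb' : ∀ i, b i = b i₀ := fun i => hconst i i₀
      have hsum : ∑ i, b i = n * b i₀ := by
        rw [Finset.sum_congr rfl fun i _ => hb' i]; simp [mul_comm]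
      have hprod' : ∏ i, b i = (b i₀) ^ n := by
        rw [Finset.prod_congr rfl fun i _ => hb' i]; simp
      rw [hsum, hprod']
      congr 1
      rw [← Real.rpow_natCast (b i₀) n, ← Real.rpow_mul (hb i₀).le]
      rw [mul_one_div, div_self hn'.ne', Real.rpow_one]

/-- The function `g(a) = ∏ aₗ + C ∑ aₗ⁻¹` on `(0, ∞)^L` attains its global minimum,
exactly at the balanced point `a₁ = … = a_L = C^(1/(L+1))`. -/
theorem stmt_10 (C : ℝ) (hC : 0 < C) (L : ℕ) (hL : 1 ≤ L) :
    ∀ a : Fin L → ℝ, (∀ ℓ, 0 < a ℓ) →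
      (C ^ ((1 : ℝ) / (L + 1))) ^ L + C * (L * (C ^ ((1 : ℝ) / (L + 1)))⁻¹)
          ≤ (∏ ℓ, a ℓ) + C * ∑ ℓ, (a ℓ)⁻¹ ∧
      ((∏ ℓ, a ℓ) + C * ∑ ℓ, (a ℓ)⁻¹ =
          (C ^ ((1 : ℝ) / (L + 1))) ^ L + C * (L * (C ^ ((1 : ℝ) / (L + 1)))⁻¹) ↔
        ∀ ℓ, a ℓ = C ^ ((1 : ℝ) / (L + 1))) := by
  intro a ha
  set c : ℝ := C ^ ((1 : ℝ) / (L + 1)) with hcdef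
  have hc : 0 < c := Real.rpow_pos_of_pos hC _
  have hL1 : (0 : ℝ) < (L : ℝ) + 1 := by positivity
  -- c ^ (L+1) = C
  have hcC : c ^ (L + 1) = C := by
    rw [hcdef, ← Real.rpow_natCast (C ^ ((1:ℝ)/(L+1))) (L+1), ← Real.rpow_mul hC.le]
    push_cast
    rw [one_div, inv_mul_cancel₀ hL1.ne', Real.rpow_one]
  -- C * c⁻¹ = c ^ L
  have hCc : C * c⁻¹ = c ^ L := by
    rw [← hcC, pow_succ]
    field_simp
  set b : Fin (L + 1) → ℝ := Fin.cons (∏ ℓ, a ℓ) (fun i => C * (a i)⁻¹) with hbdef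
  have hb : ∀ i, 0 < b i := by
    intro i
    refine Fin.cases ?_ ?_ i
    · simpa [hbdef] using Finset.prod_pos fun i _ => ha i
    · intro j
      simp only [hbdef, Fin.cons_succ]
      exact mul_pos hC (inv_pos.mpr (ha j))
  have hprodpos : (0 : ℝ) < ∏ ℓ, a ℓ := Finset.prod_pos fun i _ => ha i
  have hsumb : ∑ i, b i = (∏ ℓ, a ℓ) + C * ∑ ℓ, (a ℓ)⁻¹ := by
    rw [hbdef, Fin.sum_cons, Finset.mul_sum]
  have hprodb : ∏ i, b i = C ^ L := by
    rw [hbdef, Fin.prod_cons]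
    have hp2 : ∏ i : Fin L, (C * (a i)⁻¹) = C ^ L * (∏ ℓ, a ℓ)⁻¹ := by
      rw [Finset.prod_mul_distrib, Finset.prod_const, Finset.prod_inv_distrib,
        Finset.card_univ, Fintype.card_fin]
    rw [hp2]
    field_simp
  -- the balanced value equals (L+1) * c^L
  have hGval : (∏ i, b i) ^ ((1 : ℝ) / ((L : ℝ) + 1)) = c ^ L := by
    rw [hprodb, ← hcC, ← pow_mul, ← Real.rpow_natCast c ((L+1)*L),
      ← Real.rpow_mul hc.le, ← Real.rpow_natCast c L]
    congr 1
    push_cast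
    field_simp
  have hval : c ^ L + C * (L * c⁻¹) = ((L : ℝ) + 1) * c ^ L := by
    have : C * ((L : ℝ) * c⁻¹) = (L : ℝ) * (C * c⁻¹) := by ring
    rw [this, hCc]; ring
  obtain ⟨hineq, hiff⟩ := amgm_eq (L + 1) (Nat.succ_pos L) b hb
  have hcast : ((L + 1 : ℕ) : ℝ) = (L : ℝ) + 1 := by push_cast; ring
  rw [hcast, hGval, hsumb] at hineq hiff
  constructor
  · rw [hval]; exact hineq
  · rw [hval, hiff]
    constructor
    · intro h ℓ
      -- all b equal; first b (succ ℓ) = b 0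
      have h1 : ∀ i : Fin L, C * (a i)⁻¹ = ∏ ℓ, a ℓ := by
        intro i
        have := h (Fin.succ i) 0
        simpa [hbdef] using this
      -- all a equal to t := C * (∏ a)⁻¹
      set P : ℝ := ∏ ℓ, a ℓ with hP
      have ha' : ∀ i : Fin L, a i = C * P⁻¹ := by
        intro i
        have h2 := h1 i
        have h3 : a i * (C * (a i)⁻¹) = a i * P := by rw [h2]
        rw [mul_comm C, ← mul_assoc, mul_inv_cancel₀ (ha i).ne', one_mul] at h3
        rw [h3]
        field_simp
      set t : ℝ := C * P⁻¹ with ht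
      have htpos : 0 < t := by positivity
      have htP : t ^ L = P := by
        rw [hP, Finset.prod_congr rfl fun i _ => ha' i, Finset.prod_const]
        simp
      have htC : t ^ (L + 1) = C := by
        rw [pow_succ, htP, ht]
        field_simp
      have : t = c := by
        rw [hcdef, ← htC, ← Real.rpow_natCast t (L + 1), ← Real.rpow_mul htpos.le]
        push_cast
        rw [mul_one_div, div_self hL1.ne', Real.rpow_one]
      rw [ha' ℓ]; exact this
    · intro h i j
      have hbc : ∀ i, b i = c ^ L := by
        intro i
        refine Fin.cases ?_ ?_ i
        · simp only [hbdef, Fin.cons_zero]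
          rw [Finset.prod_congr rfl fun i _ => h i, Finset.prod_const]
          simp
        · intro k
          simp only [hbdef, Fin.cons_succ, h k]
          exact hCc
      rw [hbc i, hbc j]
end
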